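/- arXiv:1707.09351 — 2 statements merged into one kernel-verified Lean document; each statement's English description precedes it below -/
import Mathlib

section
/- Let α > 0 and π_0(H) := -(1/α)·log E[exp(-αH)]. Let (Hⁿ) and (ηⁿ) be sequences of random variables, uniformly bounded in sup-norm, with ηⁿ ≤ 0 almost surely for every n. If π_0(Hⁿ + ηⁿ) - π_0(Hⁿ) → 0 as n → ∞, then ηⁿ → 0 in probability. -/
/-!
Write `A = E[exp(-αHⁿ)]` and `B = E[exp(-α(Hⁿ + ηⁿ))]`. The hypothesis says `log B - log A → 0`,
and since `A` stays bounded this forces `B - A → 0`. On the other hand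
`B - A = E[exp(-αHⁿ)(exp(-αηⁿ) - 1)] ≥ α exp(-αC) E|ηⁿ|`, because `exp(-αHⁿ) ≥ exp(-αC)` and
`exp x - 1 ≥ x` for `x = -αηⁿ ≥ 0`. Hence `ηⁿ → 0` in `L¹`, and so in probability.
-/

open MeasureTheory Filter Topology Real

lemma tendsto_sub_of_tendsto_log_sub {ι : Type*} {l : Filter ι} {a b : ι → ℝ} {M : ℝ}
    (ha : ∀ i, 0 < a i) (haM : ∀ i, a i ≤ M) (hb : ∀ i, 0 < b i)
    (h : Tendsto (fun i => log (b i) - log (a i)) l (𝓝 0)) :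
    Tendsto (fun i => b i - a i) l (𝓝 0) := by
  have hexp : Tendsto (fun i => exp (log (b i) - log (a i)) - 1) l (𝓝 0) := by
    simpa using ((continuous_exp.tendsto 0).comp h).sub_const 1
  refine (bdd_le_mul_tendsto_zero (.of_forall fun i => (ha i).le) (.of_forall haM) hexp).congr
    fun i => ?_
  rw [exp_sub, exp_log (hb i), exp_log (ha i)]
  field_simp [(ha i).ne']

lemma mul_exp_mul_abs_le_exp_sub_exp {α C h η : ℝ} (hα : 0 ≤ α) (hh : h ≤ C) (hη : η ≤ 0) :
    α * exp (-α * C) * |η| ≤ exp (-α * (h + η)) - exp (-α * h) := by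
  have hfactor : exp (-α * (h + η)) - exp (-α * h) = exp (-α * h) * (exp (-α * η) - 1) := by
    rw [mul_sub, mul_one, ← exp_add]; ring_nf
  have hweight : exp (-α * C) ≤ exp (-α * h) := exp_le_exp.2 (by nlinarith)
  have hlinear : α * |η| ≤ exp (-α * η) - 1 := by
    rw [abs_of_nonpos hη]; linarith [add_one_le_exp (-α * η)]
  calc α * exp (-α * C) * |η| = exp (-α * C) * (α * |η|) := by ring
    _ ≤ exp (-α * h) * (exp (-α * η) - 1) :=
      mul_le_mul hweight hlinear (by positivity) (exp_pos _).le
    _ = _ := hfactor.symm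

section

variable {Ω : Type*} [MeasurableSpace Ω] {μ : Measure Ω}

lemma integrable_exp_of_le [IsFiniteMeasure μ] {f : Ω → ℝ} (hf : Measurable f) {K : ℝ}
    (hK : ∀ ω, f ω ≤ K) : Integrable (fun ω => exp (f ω)) μ :=
  .of_bound hf.exp.aestronglyMeasurable (exp K)
    (ae_of_all _ fun ω => by simpa [abs_of_pos (exp_pos _)] using exp_le_exp.2 (hK ω))

lemma integrable_exp_neg_mul_of_abs_le [IsFiniteMeasure μ] {H : Ω → ℝ} (hH : Measurable H)
    {C : ℝ} (hHb : ∀ ω, |H ω| ≤ C) (α : ℝ) : Integrable (fun ω => exp (-α * H ω)) μ :=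
  integrable_exp_of_le (K := |α| * C) (by fun_prop) fun ω =>
    calc -α * H ω ≤ |α| * |H ω| := by simpa [abs_mul] using le_abs_self (-α * H ω)
      _ ≤ |α| * C := by gcongr; exact hHb ω

lemma mul_integral_abs_le_integral_exp_sub [IsFiniteMeasure μ] {α C : ℝ} (hα : 0 ≤ α)
    {H η : Ω → ℝ} (hH : Measurable H) (hη : Measurable η) (hHb : ∀ ω, |H ω| ≤ C)
    (hηb : ∀ ω, |η ω| ≤ C) (hηneg : ∀ᵐ ω ∂μ, η ω ≤ 0) :
    α * exp (-α * C) * ∫ ω, |η ω| ∂μ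
      ≤ ∫ ω, exp (-α * (H ω + η ω)) ∂μ - ∫ ω, exp (-α * H ω) ∂μ := by
  have hA := integrable_exp_neg_mul_of_abs_le (μ := μ) hH hHb α
  have hB := integrable_exp_neg_mul_of_abs_le (μ := μ) (H := fun ω => H ω + η ω) (hH.add hη)
    (fun ω => (abs_add_le _ _).trans (add_le_add (hHb ω) (hηb ω))) α
  have hη_int : Integrable η μ := .of_bound hη.aestronglyMeasurable C (ae_of_all _ hηb)
  rw [← integral_const_mul, ← integral_sub hB hA]
  refine integral_mono_ae (hη_int.abs.const_mul _) (hB.sub hA) ?_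
  filter_upwards [hηneg] with ω hω
  exact mul_exp_mul_abs_le_exp_sub_exp hα (le_of_abs_le (hHb ω)) hω

lemma tendstoInMeasure_zero_of_tendsto_integral_norm {ι E : Type*} [NormedAddCommGroup E]
    {l : Filter ι} {f : ι → Ω → E} (hf : ∀ i, Integrable (f i) μ)
    (h : Tendsto (fun i => ∫ ω, ‖f i ω‖ ∂μ) l (𝓝 0)) :
    TendstoInMeasure μ f l 0 := by
  refine tendstoInMeasure_of_tendsto_eLpNorm one_ne_zero (fun i => (hf i).aestronglyMeasurable)
    aestronglyMeasurable_const ?_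
  simp_rw [sub_zero, eLpNorm_one_eq_lintegral_enorm,
    ← ofReal_integral_norm_eq_lintegral_enorm (hf _)]
  simpa using ENNReal.tendsto_ofReal h

end

theorem stmt8 {Ω : Type*} [MeasurableSpace Ω] (P : Measure Ω) [IsProbabilityMeasure P]
    (α : ℝ) (hα : 0 < α)
    (Hn ηn : ℕ → Ω → ℝ) (hHn : ∀ n, Measurable (Hn n)) (hηn : ∀ n, Measurable (ηn n))
    (C : ℝ) (hHb : ∀ n ω, |Hn n ω| ≤ C) (hηb : ∀ n ω, |ηn n ω| ≤ C)
    (hηneg : ∀ n, ∀ᵐ ω ∂P, ηn n ω ≤ 0)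
    (hconv : Tendsto (fun n =>
        (-(1/α) * Real.log (∫ ω, Real.exp (-α * (Hn n ω + ηn n ω)) ∂P))
          - (-(1/α) * Real.log (∫ ω, Real.exp (-α * Hn n ω) ∂P))) atTop (nhds 0)) :
    TendstoInMeasure P ηn atTop (fun _ => (0:ℝ)) := by
  set A : ℕ → ℝ := fun n => ∫ ω, exp (-α * Hn n ω) ∂P
  set B : ℕ → ℝ := fun n => ∫ ω, exp (-α * (Hn n ω + ηn n ω)) ∂P
  have hA_int n := integrable_exp_neg_mul_of_abs_le (μ := P) (hHn n) (hHb n) α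
  have hB_int n := integrable_exp_neg_mul_of_abs_le (μ := P) (H := fun ω => Hn n ω + ηn n ω)
    ((hHn n).add (hηn n))
    (fun ω => (abs_add_le _ _).trans (add_le_add (hHb n ω) (hηb n ω))) α
  have hA_le n : A n ≤ exp (α * C) := by
    have hle ω : -α * Hn n ω ≤ α * C := by nlinarith [neg_abs_le (Hn n ω), hHb n ω]
    exact (integral_mono (hA_int n) (integrable_const _) fun ω => exp_le_exp.2 (hle ω)).trans_eq
      (by simp)
  have hlog : Tendsto (fun n => log (B n) - log (A n)) atTop (𝓝 0) := by
    have h := hconv.const_mul (-α)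
    rw [mul_zero] at h
    refine h.congr fun n => ?_
    change -α * (-(1 / α) * log (B n) - -(1 / α) * log (A n)) = _
    field_simp
    ring
  have hgap := tendsto_sub_of_tendsto_log_sub (fun n => integral_exp_pos (hA_int n)) hA_le
    (fun n => integral_exp_pos (hB_int n)) hlog
  have hc : 0 < α * exp (-α * C) := by positivity
  have hL1 : Tendsto (fun n => ∫ ω, ‖ηn n ω‖ ∂P) atTop (𝓝 0) := by
    refine squeeze_zero (fun n => integral_nonneg fun ω => norm_nonneg _) (fun n => ?_)
      (by simpa only [zero_div] using hgap.div_const (α * exp (-α * C)))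
    exact (le_div_iff₀' hc).2 (mul_integral_abs_le_integral_exp_sub hα.le (hHn n) (hηn n)
      (hHb n) (hηb n) (hηneg n))
  exact tendstoInMeasure_zero_of_tendsto_integral_norm
    (fun n => .of_bound (hηn n).aestronglyMeasurable C (ae_of_all _ (hηb n))) hL1
end

section
/- Let (Ω, F, (F_t)_{t∈[0,T]}, P) be a filtered probability space and let (π_t)_{t∈[0,T]} be a family of maps from bounded random variables to bounded F_t-measurable random variables satisfying: monotonicity (H¹ ≤ H² ⟹ π_t(H¹) ≤ π_t(H²) a.s.), translation invariance (π_t(H + x) = π_t(H) + x a.s. for bounded F_t-measurable x), the local property (π_t(H¹1_Λ + H²1_{Λᶜ}) = 1_Λ π_t(H¹) + 1_{Λᶜ} π_t(H²) a.s. for Λ ∈ F_t), and time consistency (π_t(π_s(H)) = π_t(H) a.s. for t ≤ s). Let V = (V_t) be a bounded adapted process such that π_t(V_s) ≤ V_t a.s. for all deterministic 0 ≤ t ≤ s ≤ T. Then for every stopping time τ taking finitely many values in [t, T]: π_t(V_τ) ≤ V_t almost surely. -/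
/-!
Induct on the finite set `S` of values of `τ`, removing its least element `a`. The event
`{τ ≤ a} = {τ = a}` lies in `F a`, and off it `τ` agrees with the stopping time `max τ b`, `b` the
next value. The local property at time `a` combines `π a (V a) ≤ V a` with the induction
hypothesis `π a (V (max τ b)) ≤ V a` into `π a (V τ) ≤ V a`; time consistency and monotonicity then
pass from time `a` back to time `t`, where `π t (V a) ≤ V t`.
-/

open MeasureTheory

theorem MeasureTheory.IsStoppingTime.coe_max_const {Ω : Type*} {mΩ : MeasurableSpace Ω}
    {F : Filtration ℝ mΩ} {τ : Ω → ℝ} (hτ : IsStoppingTime F (fun ω => (τ ω : WithTop ℝ)))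
    (b : ℝ) : IsStoppingTime F (fun ω => ((max (τ ω) b : ℝ) : WithTop ℝ)) := by
  simpa only [WithTop.coe_max] using hτ.max_const b

section NonlinearExpectation

variable {Ω : Type*} {mΩ : MeasurableSpace Ω} {P : Measure Ω} {F : Filtration ℝ mΩ}
  {π : ℝ → (Ω → ℝ) → (Ω → ℝ)}

theorem ae_le_piecewise_of_local
    (hlocal : ∀ t (H1 H2 : Ω → ℝ) (Λ : Set Ω), MeasurableSet[F t] Λ →
      π t (fun ω => Set.indicator Λ H1 ω + Set.indicator Λᶜ H2 ω)
        =ᵐ[P] fun ω => Set.indicator Λ (π t H1) ω + Set.indicator Λᶜ (π t H2) ω)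
    {u : ℝ} {X Y W : Ω → ℝ} {Λ : Set Ω} (hΛ : MeasurableSet[F u] Λ)
    (hX : π u X ≤ᵐ[P] W) (hY : π u Y ≤ᵐ[P] W) :
    π u (fun ω => Λ.indicator X ω + Λᶜ.indicator Y ω) ≤ᵐ[P] W := by
  filter_upwards [hlocal u X Y Λ hΛ, hX, hY] with ω hω hXω hYω
  rw [hω]
  by_cases h : ω ∈ Λ
  · simpa [h] using hXω
  · simpa [h] using hYω

theorem ae_le_of_ae_le_at_later
    (hmono : ∀ t (H1 H2 : Ω → ℝ), H1 ≤ᵐ[P] H2 → π t H1 ≤ᵐ[P] π t H2)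
    (htc : ∀ t s : ℝ, t ≤ s → ∀ H : Ω → ℝ, π t (π s H) =ᵐ[P] π t H)
    {u a : ℝ} (hua : u ≤ a) {X W W' : Ω → ℝ}
    (hX : π a X ≤ᵐ[P] W) (hW : π u W ≤ᵐ[P] W') : π u X ≤ᵐ[P] W' := by
  filter_upwards [htc u a hua X, hmono u _ _ hX, hW] with ω htcω hmonoω hWω
  rw [← htcω]
  exact hmonoω.trans hWω

theorem ae_le_of_stoppingTime_mem_finset
    (hmono : ∀ t (H1 H2 : Ω → ℝ), H1 ≤ᵐ[P] H2 → π t H1 ≤ᵐ[P] π t H2)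
    (hlocal : ∀ t (H1 H2 : Ω → ℝ) (Λ : Set Ω), MeasurableSet[F t] Λ →
      π t (fun ω => Set.indicator Λ H1 ω + Set.indicator Λᶜ H2 ω)
        =ᵐ[P] fun ω => Set.indicator Λ (π t H1) ω + Set.indicator Λᶜ (π t H2) ω)
    (htc : ∀ t s : ℝ, t ≤ s → ∀ H : Ω → ℝ, π t (π s H) =ᵐ[P] π t H)
    {V : ℝ → Ω → ℝ} {T : ℝ}
    (hVsuper : ∀ t s : ℝ, 0 ≤ t → t ≤ s → s ≤ T → π t (V s) ≤ᵐ[P] V t)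
    (S : Finset ℝ) {u : ℝ} (hu : 0 ≤ u) (hS : ∀ x ∈ S, u ≤ x ∧ x ≤ T) {τ : Ω → ℝ}
    (hτ : IsStoppingTime F (fun ω => (τ ω : WithTop ℝ))) (hτS : ∀ ω, τ ω ∈ S) :
    π u (fun ω => V (τ ω) ω) ≤ᵐ[P] V u := by
  induction S using Finset.induction_on_min generalizing u τ with
  | empty => exact Filter.Eventually.of_forall fun ω => absurd (hτS ω) (Finset.notMem_empty _)
  | insert a s has ih =>
    obtain ⟨hua, haT⟩ := hS a (Finset.mem_insert_self a s)
    have ha : 0 ≤ a := hu.trans hua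
    suffices hτa : π a (fun ω => V (τ ω) ω) ≤ᵐ[P] V a from
      ae_le_of_ae_le_at_later hmono htc hua hτa (hVsuper u a hu hua haT)
    have hτ_cases : ∀ ω, τ ω = a ∨ τ ω ∈ s := fun ω => Finset.mem_insert.1 (hτS ω)
    have hτs : ∀ ω, ¬τ ω ≤ a → τ ω ∈ s := fun ω hω =>
      (hτ_cases ω).resolve_left fun h => hω h.le
    rcases s.eq_empty_or_nonempty with rfl | hs
    · have hτa : ∀ ω, τ ω = a := fun ω => Finset.mem_singleton.1 (hτS ω)
      simpa only [hτa] using hVsuper a a ha le_rfl haT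
    set b := s.min' hs
    have hmax : ∀ ω, ¬τ ω ≤ a → max (τ ω) b = τ ω := fun ω hω =>
      max_eq_left (s.min'_le _ (hτs ω hω))
    have hτ' : π a (fun ω => V (max (τ ω) b) ω) ≤ᵐ[P] V a := by
      refine ih ha (fun x hx => ⟨(has x hx).le, (hS x (Finset.mem_insert_of_mem hx)).2⟩)
        (hτ.coe_max_const b) fun ω => ?_
      by_cases hω : τ ω ≤ a
      · rw [max_eq_right (hω.trans (has b (s.min'_mem hs)).le)]
        exact s.min'_mem hs
      · rw [hmax ω hω]
        exact hτs ω hω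
    have hdecomp : (fun ω => V (τ ω) ω) = fun ω => {ω | τ ω ≤ a}.indicator (V a) ω
        + {ω | τ ω ≤ a}ᶜ.indicator (fun ω => V (max (τ ω) b) ω) ω := by
      funext ω
      by_cases hω : τ ω ≤ a
      · have : τ ω = a := (hτ_cases ω).resolve_right fun h => (has _ h).not_ge hω
        simp [this]
      · simp [hω, hmax ω hω]
    rw [hdecomp]
    exact ae_le_piecewise_of_local hlocal (by simpa using hτ a)
      (hVsuper a a ha le_rfl haT) hτ'

end NonlinearExpectation

theorem stmt17_general {Ω : Type*} {mΩ : MeasurableSpace Ω} {P : Measure Ω}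
    (F : Filtration ℝ mΩ) (T : ℝ)
    (π : ℝ → (Ω → ℝ) → (Ω → ℝ))
    (hmono : ∀ t (H1 H2 : Ω → ℝ), H1 ≤ᵐ[P] H2 → π t H1 ≤ᵐ[P] π t H2)
    (hlocal : ∀ t (H1 H2 : Ω → ℝ) (Λ : Set Ω), MeasurableSet[F t] Λ →
      π t (fun ω => Set.indicator Λ H1 ω + Set.indicator Λᶜ H2 ω)
        =ᵐ[P] fun ω => Set.indicator Λ (π t H1) ω + Set.indicator Λᶜ (π t H2) ω)
    (htc : ∀ t s : ℝ, t ≤ s → ∀ H : Ω → ℝ, π t (π s H) =ᵐ[P] π t H)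
    (V : ℝ → Ω → ℝ)
    (hVsuper : ∀ t s : ℝ, 0 ≤ t → t ≤ s → s ≤ T → π t (V s) ≤ᵐ[P] V t)
    (t : ℝ) (ht : 0 ≤ t)
    (τ : Ω → ℝ) (hτ : IsStoppingTime F (fun ω => (τ ω : WithTop ℝ))) (hτfin : (Set.range τ).Finite)
    (hτmem : ∀ ω, τ ω ∈ Set.Icc t T) :
    π t (fun ω => V (τ ω) ω) ≤ᵐ[P] V t :=
  ae_le_of_stoppingTime_mem_finset hmono hlocal htc hVsuper hτfin.toFinset ht
    (fun x hx => by
      obtain ⟨ω, rfl⟩ := hτfin.mem_toFinset.1 hx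
      exact hτmem ω)
    hτ fun ω => hτfin.mem_toFinset.2 ⟨ω, rfl⟩

theorem stmt17 {Ω : Type*} {mΩ : MeasurableSpace Ω} {P : Measure Ω} [IsProbabilityMeasure P]
    (F : Filtration ℝ mΩ) (T : ℝ)
    (π : ℝ → (Ω → ℝ) → (Ω → ℝ))
    (hπmeas : ∀ t (H : Ω → ℝ), StronglyMeasurable[F t] (π t H))
    (hπbdd : ∀ t (H : Ω → ℝ), (∃ c, ∀ ω, |H ω| ≤ c) → ∃ c, ∀ ω, |π t H ω| ≤ c)
    (hmono : ∀ t (H1 H2 : Ω → ℝ), H1 ≤ᵐ[P] H2 → π t H1 ≤ᵐ[P] π t H2)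
    (htrans : ∀ t (H x : Ω → ℝ), StronglyMeasurable[F t] x → (∃ c, ∀ ω, |x ω| ≤ c) →
      π t (fun ω => H ω + x ω) =ᵐ[P] fun ω => π t H ω + x ω)
    (hlocal : ∀ t (H1 H2 : Ω → ℝ) (Λ : Set Ω), MeasurableSet[F t] Λ →
      π t (fun ω => Set.indicator Λ H1 ω + Set.indicator Λᶜ H2 ω)
        =ᵐ[P] fun ω => Set.indicator Λ (π t H1) ω + Set.indicator Λᶜ (π t H2) ω)
    (htc : ∀ t s : ℝ, t ≤ s → ∀ H : Ω → ℝ, π t (π s H) =ᵐ[P] π t H)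
    (V : ℝ → Ω → ℝ)
    (hVadapted : ∀ t, StronglyMeasurable[F t] (V t))
    (hVbdd : ∃ c, ∀ t ω, |V t ω| ≤ c)
    (hVsuper : ∀ t s : ℝ, 0 ≤ t → t ≤ s → s ≤ T → π t (V s) ≤ᵐ[P] V t)
    (t : ℝ) (ht : 0 ≤ t) (htT : t ≤ T)
    (τ : Ω → ℝ) (hτ : IsStoppingTime F (fun ω => (τ ω : WithTop ℝ))) (hτfin : (Set.range τ).Finite)
    (hτmem : ∀ ω, τ ω ∈ Set.Icc t T) :
    π t (fun ω => V (τ ω) ω) ≤ᵐ[P] V t :=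
  stmt17_general F T π hmono hlocal htc V hVsuper t ht τ hτ hτfin hτmem
end
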